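/- The number of special roots (positive roots α such that θ − α is also a root) equals 2(h∨ − 2), where h∨ is the dual Coxeter number. -/

import Mathlib

/-!
Two roots `α ≠ ±β` with `⟪α, β⟫ < 0` sum to a root: the product of their two Cartan integers is
`4 cos² ∠(α, β) < 4`, so one of them is `-1` and the corresponding reflection is `α + β`.
Applied to the highest root `θ`, this shows that for a positive root `α ≠ θ` the integer
`⟪α, θ⟫` is `0` or `1`, and that it is `1` exactly when `θ - α` is a root. Hence
`2 ⟪ρ, θ⟫ = ∑_{α > 0} ⟪α, θ⟫ = ⟪θ, θ⟫ + #specials = 2 + #specials`.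
-/

open RealInnerProductSpace Finset
open scoped Classical

/-- The data of a reduced irreducible (crystallographic) root system of a
finite-dimensional complex simple Lie algebra, realized in a real inner
product space, together with a choice of positive roots and the highest
root `θ`, with the invariant form normalized so that `(θ,θ) = 2`. -/
structure SimpleRootData (V : Type*) [NormedAddCommGroup V]
    [InnerProductSpace ℝ V] [FiniteDimensional ℝ V] where
  /-- the set of roots Δ -/
  Δ : Finset V
  /-- the set of positive roots Δ₊ -/
  Pos : Finset V
  /-- the highest root θ -/
  θ : V
  zero_not_mem : (0 : V) ∉ Δ
  span_eq_top : Submodule.span ℝ (Δ : Set V) = ⊤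
  neg_mem : ∀ α ∈ Δ, -α ∈ Δ
  reflect_mem : ∀ α ∈ Δ, ∀ β ∈ Δ,
    β - (2 * (inner ℝ β α : ℝ) / (inner ℝ α α : ℝ)) • α ∈ Δ
  integral : ∀ α ∈ Δ, ∀ β ∈ Δ, ∃ n : ℤ, 2 * (inner ℝ β α : ℝ) / (inner ℝ α α : ℝ) = (n : ℝ)
  reduced : ∀ α ∈ Δ, ∀ t : ℝ, t • α ∈ Δ → t = 1 ∨ t = -1
  /-- irreducibility (simplicity of the Lie algebra) -/
  irreducible : ∀ s ⊆ Δ, (∀ α ∈ s, ∀ β ∈ Δ, β ∉ s → (inner ℝ α β : ℝ) = 0) →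
    s = ∅ ∨ s = Δ
  pos_subset : Pos ⊆ Δ
  pos_iff : ∀ α ∈ Δ, α ∈ Pos ↔ -α ∉ Pos
  pos_add : ∀ α ∈ Pos, ∀ β ∈ Pos, α + β ∈ Δ → α + β ∈ Pos
  θ_pos : θ ∈ Pos
  /-- θ is the highest root -/
  θ_highest : ∀ α ∈ Pos, θ + α ∉ Δ
  /-- normalization (θ,θ) = 2 -/
  θ_norm : (inner ℝ θ θ : ℝ) = 2

namespace SimpleRootData

variable {V : Type*} [NormedAddCommGroup V] [InnerProductSpace ℝ V]
  [FiniteDimensional ℝ V] (D : SimpleRootData V)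

/-- ρ, half the sum of the positive roots. -/
noncomputable def ρ : V := (2 : ℝ)⁻¹ • ∑ α ∈ D.Pos, α

/-- The dual Coxeter number h∨ = (ρ,θ) + 1. -/
noncomputable def h : ℝ := (inner ℝ D.ρ D.θ : ℝ) + 1

/-- The reflection r_θ in the highest root θ. -/
noncomputable def rθ (x : V) : V := x - (2 * (inner ℝ x D.θ : ℝ) / (inner ℝ D.θ D.θ : ℝ)) • D.θ

/-- A positive root α is *special* if θ − α is also a root. -/
def IsSpecial (α : V) : Prop := α ∈ D.Pos ∧ D.θ - α ∈ D.Δ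

/-- The set of special roots. -/
noncomputable def specials : Finset V :=
  D.Pos.filter fun α => D.θ - α ∈ D.Δ

/-- The set of positive roots not orthogonal to θ. -/
noncomputable def nonOrth : Finset V :=
  D.Pos.filter fun α => (inner ℝ α D.θ : ℝ) ≠ 0

end SimpleRootData

open SimpleRootData

variable {V : Type*} [NormedAddCommGroup V] [InnerProductSpace ℝ V]
  [FiniteDimensional ℝ V]

namespace SimpleRootData

variable (D : SimpleRootData V) {α β : V}

lemma ne_zero_of_mem (hα : α ∈ D.Δ) : α ≠ 0 :=
  fun h => D.zero_not_mem (h ▸ hα)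

lemma inner_self_pos_of_mem (hα : α ∈ D.Δ) : 0 < ⟪α, α⟫ :=
  real_inner_self_pos.2 (D.ne_zero_of_mem hα)

lemma exists_int_sub_smul_mem (hα : α ∈ D.Δ) (hβ : β ∈ D.Δ) :
    ∃ n : ℤ, (n : ℝ) * ⟪α, α⟫ = 2 * ⟪β, α⟫ ∧ β - (n : ℝ) • α ∈ D.Δ := by
  obtain ⟨n, hn⟩ := D.integral α hα β hβ
  refine ⟨n, ?_, hn ▸ D.reflect_mem α hα β hβ⟩
  rw [← hn, div_mul_cancel₀ _ (D.inner_self_pos_of_mem hα).ne']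

lemma inner_sq_lt_inner_self_mul_inner_self (hα : α ∈ D.Δ) (hβ : β ∈ D.Δ)
    (hβα : β ≠ α) (hβα' : β ≠ -α) : ⟪α, β⟫ ^ 2 < ⟪α, α⟫ * ⟪β, β⟫ := by
  have hlt : |⟪α, β⟫| < ‖α‖ * ‖β‖ := by
    refine (abs_real_inner_le_norm α β).lt_of_ne fun h => ?_
    obtain ⟨r, -, rfl⟩ := (norm_inner_eq_norm_iff (𝕜 := ℝ) (D.ne_zero_of_mem hα)
      (D.ne_zero_of_mem hβ)).1 (by rwa [Real.norm_eq_abs])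
    rcases D.reduced α hα r hβ with rfl | rfl
    · exact hβα (one_smul ℝ α)
    · exact hβα' (neg_one_smul ℝ α)
  calc ⟪α, β⟫ ^ 2 = |⟪α, β⟫| ^ 2 := (sq_abs _).symm
    _ < (‖α‖ * ‖β‖) ^ 2 := by gcongr
    _ = ⟪α, α⟫ * ⟪β, β⟫ := by
      rw [mul_pow, ← real_inner_self_eq_norm_sq, ← real_inner_self_eq_norm_sq]

lemma add_mem_of_inner_neg (hα : α ∈ D.Δ) (hβ : β ∈ D.Δ) (hβα : β ≠ -α)
    (hneg : ⟪α, β⟫ < 0) : α + β ∈ D.Δ := by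
  have hαα := D.inner_self_pos_of_mem hα
  have hββ := D.inner_self_pos_of_mem hβ
  have hne : β ≠ α := by rintro rfl; linarith
  have hcs := D.inner_sq_lt_inner_self_mul_inner_self hα hβ hne hβα
  obtain ⟨n, hn, hn_mem⟩ := D.exists_int_sub_smul_mem hα hβ
  obtain ⟨m, hm, hm_mem⟩ := D.exists_int_sub_smul_mem hβ hα
  rw [real_inner_comm α β] at hn
  have hn_neg : n < 0 := by
    have : (n : ℝ) < 0 := by nlinarith
    exact_mod_cast this
  have hm_neg : m < 0 := by
    have : (m : ℝ) < 0 := by nlinarith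
    exact_mod_cast this
  have hnm : n * m < 4 := by
    have hprod : (n : ℝ) * m * (⟪α, α⟫ * ⟪β, β⟫) = 4 * ⟪α, β⟫ ^ 2 := by
      linear_combination ((m : ℝ) * ⟪β, β⟫) * hn + (2 * ⟪α, β⟫) * hm
    have : (n : ℝ) * m * (⟪α, α⟫ * ⟪β, β⟫) < 4 * (⟪α, α⟫ * ⟪β, β⟫) := by
      linarith
    exact_mod_cast lt_of_mul_lt_mul_right this (by positivity)
  obtain rfl | rfl : n = -1 ∨ m = -1 := by
    by_contra! h
    have : n ≤ -2 := by omega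
    have : m ≤ -2 := by omega
    nlinarith
  · simpa [add_comm] using hn_mem
  · simpa using hm_mem

lemma sub_mem_of_inner_pos (hα : α ∈ D.Δ) (hβ : β ∈ D.Δ) (hβα : β ≠ α)
    (hpos : 0 < ⟪α, β⟫) : α - β ∈ D.Δ := by
  rw [sub_eq_add_neg]
  exact D.add_mem_of_inner_neg hα (D.neg_mem β hβ) (by simpa using hβα)
    (by simpa [inner_neg_right] using hpos)

lemma θ_mem : D.θ ∈ D.Δ := D.pos_subset D.θ_pos

lemma exists_int_inner_θ (hα : α ∈ D.Δ) :
    ∃ n : ℤ, ⟪α, D.θ⟫ = n ∧ α - (n : ℝ) • D.θ ∈ D.Δ := by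
  obtain ⟨n, hn, hmem⟩ := D.exists_int_sub_smul_mem D.θ_mem hα
  rw [D.θ_norm] at hn
  exact ⟨n, by linarith, hmem⟩

lemma inner_θ_nonneg (hα : α ∈ D.Pos) : 0 ≤ ⟪α, D.θ⟫ := by
  by_contra! hneg
  have hne : α ≠ -D.θ := by rintro rfl; exact (D.pos_iff D.θ D.θ_mem).1 D.θ_pos hα
  refine D.θ_highest α hα (D.add_mem_of_inner_neg D.θ_mem (D.pos_subset hα) hne ?_)
  rwa [real_inner_comm]

lemma sub_mem_Pos (hα : α ∈ D.Δ) (h : D.θ - α ∈ D.Δ) : D.θ - α ∈ D.Pos := by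
  rw [D.pos_iff _ h]
  intro hneg
  refine D.θ_highest _ hneg ?_
  rwa [neg_sub, add_sub_cancel]

lemma inner_θ_le_one (hα : α ∈ D.Pos) (hne : α ≠ D.θ) : ⟪α, D.θ⟫ ≤ 1 := by
  by_contra! hgt
  have hαΔ := D.pos_subset hα
  have hsub : D.θ - α ∈ D.Pos := D.sub_mem_Pos hαΔ
    (D.sub_mem_of_inner_pos D.θ_mem hαΔ hne (by rw [real_inner_comm]; linarith))
  have hle : ⟪α, D.θ⟫ ≤ 2 := by
    have := D.inner_θ_nonneg hsub
    rwa [inner_sub_left, D.θ_norm, sub_nonneg] at this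
  obtain ⟨n, hn, hmem⟩ := D.exists_int_inner_θ hαΔ
  have hn2 : n = 2 := by
    rw [hn] at hgt hle
    have : 1 < n := by exact_mod_cast hgt
    have : n ≤ 2 := by exact_mod_cast hle
    omega
  -- reflecting `α` in `θ` gives `α - 2θ`, whose negative `θ + (θ - α)` exceeds `θ`
  refine D.θ_highest _ hsub ?_
  convert D.neg_mem _ hmem using 1
  rw [hn2]
  module

lemma sub_mem_iff_inner_θ_eq_one (hα : α ∈ D.Pos) :
    D.θ - α ∈ D.Δ ↔ ⟪α, D.θ⟫ = 1 := by
  have hαΔ := D.pos_subset hα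
  constructor
  · intro h
    have hne : α ≠ D.θ := by rintro rfl; exact D.zero_not_mem (by simpa using h)
    have hsub_ne : D.θ - α ≠ D.θ := by
      simpa [sub_eq_self] using D.ne_zero_of_mem hαΔ
    have := D.inner_θ_le_one (D.sub_mem_Pos hαΔ h) hsub_ne
    rw [inner_sub_left, D.θ_norm] at this
    linarith [D.inner_θ_le_one hα hne]
  · intro h1
    obtain ⟨n, hn, hmem⟩ := D.exists_int_inner_θ hαΔ
    have := D.neg_mem _ hmem
    rwa [← hn, h1, one_smul, neg_sub] at this

lemma inner_θ_eq_zero (hα : α ∈ D.Pos) (hne : α ≠ D.θ) (hsub : D.θ - α ∉ D.Δ) :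
    ⟪α, D.θ⟫ = 0 := by
  obtain ⟨n, hn, -⟩ := D.exists_int_inner_θ (D.pos_subset hα)
  have h0 := D.inner_θ_nonneg hα
  have h1 := D.inner_θ_le_one hα hne
  have h1' := mt (D.sub_mem_iff_inner_θ_eq_one hα).2 hsub
  rw [hn] at h0 h1 h1' ⊢
  norm_cast at h0 h1 h1' ⊢
  omega

lemma sum_inner_θ : ∑ α ∈ D.Pos, ⟪α, D.θ⟫ = #D.specials + 2 := by
  rw [← sum_filter_add_sum_filter_not D.Pos (fun α => D.θ - α ∈ D.Δ)]
  have hspecial : ∑ α ∈ D.specials, ⟪α, D.θ⟫ = #D.specials := by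
    rw [card_eq_sum_ones, Nat.cast_sum, Nat.cast_one]
    refine sum_congr rfl fun α hα => ?_
    obtain ⟨hpos, hsub⟩ := mem_filter.1 hα
    exact (D.sub_mem_iff_inner_θ_eq_one hpos).1 hsub
  have hθ : D.θ ∈ D.Pos.filter fun α => D.θ - α ∉ D.Δ :=
    mem_filter.2 ⟨D.θ_pos, by simpa using D.zero_not_mem⟩
  rw [← specials, hspecial, sum_eq_single_of_mem D.θ hθ, D.θ_norm]
  intro α hα hne
  obtain ⟨hpos, hsub⟩ := mem_filter.1 hα
  exact D.inner_θ_eq_zero hpos hne hsub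

lemma inner_ρ_θ : ⟪D.ρ, D.θ⟫ = (#D.specials + 2) / 2 := by
  rw [ρ, real_inner_smul_left, sum_inner, sum_inner_θ]
  ring

end SimpleRootData

/-- the number of special roots equals 2(h∨ − 2). -/
theorem card_specials (D : SimpleRootData V) :
    (D.specials.card : ℝ) = 2 * (D.h - 2) := by
  rw [h, inner_ρ_θ]
  ring
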